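/- arXiv:2004.12774 — 2 statements merged into one kernel-verified Lean document; each statement's English description precedes it below -/
import Mathlib

section
/- A monic real polynomial f of degree 4 is the characteristic polynomial of some derivation of the Lie algebra rh₃ = h₃ × ℝ if and only if there exist real numbers s, v and p such that f = (X − s)(X − v)(X² − sX + p). -/
set_option linter.unusedTactic false
set_option linter.unnecessarySeqFocus false
set_option linter.unreachableTactic false

open Polynomial

/-- The 3-dimensional Heisenberg Lie algebra `h₃`: the real vector space `Fin 3 → ℝ`
with basis `e₁, e₂, e₃` and only nonzero bracket `⁅e₁, e₂⁆ = e₃`. -/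
def H3 : Type := Fin 3 → ℝ

noncomputable instance : AddCommGroup H3 := Pi.addCommGroup
noncomputable instance : Module ℝ H3 := Pi.module _ _ _
instance : FiniteDimensional ℝ H3 := inferInstanceAs (FiniteDimensional ℝ (Fin 3 → ℝ))

lemma H3.add_apply (x y : H3) (i : Fin 3) : (x + y) i = x i + y i := rfl
lemma H3.smul_apply (r : ℝ) (x : H3) (i : Fin 3) : (r • x) i = r * x i := rfl

noncomputable instance : LieRing H3 :=
  { (inferInstance : AddCommGroup H3) with
    bracket := fun x y => ![0, 0, x 0 * y 1 - x 1 * y 0]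
    add_lie := by
      intro x y z
      show (![_,_,_] : Fin 3 → ℝ) = (![_,_,_] : H3) + (![_,_,_] : H3)
      funext i
      fin_cases i <;> simp [H3.add_apply] <;> ring
    lie_add := by
      intro x y z
      show (![_,_,_] : Fin 3 → ℝ) = (![_,_,_] : H3) + (![_,_,_] : H3)
      funext i
      fin_cases i <;> simp [H3.add_apply] <;> ring
    lie_self := by
      intro x
      show (![_,_,_] : Fin 3 → ℝ) = 0
      funext i
      fin_cases i <;> simp <;> ring
    leibniz_lie := by
      intro x y z
      show (![_,_,_] : Fin 3 → ℝ) = (![_,_,_] : H3) + (![_,_,_] : H3)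
      funext i
      fin_cases i <;> simp [H3.add_apply] <;> ring }

noncomputable instance : LieAlgebra ℝ H3 :=
  { lie_smul := by
      intro r x y
      show (![_,_,_] : Fin 3 → ℝ) = r • (![_,_,_] : H3)
      funext i
      fin_cases i <;> simp [H3.smul_apply] <;> ring }

/-- `rh₃ := h₃ × ℝ`, the product Lie algebra of the Heisenberg Lie algebra `h₃` with the
1-dimensional abelian Lie algebra `ℝ`. -/
def RH3 : Type := H3 × ℝ

noncomputable instance : AddCommGroup RH3 := inferInstanceAs (AddCommGroup (H3 × ℝ))
noncomputable instance : Module ℝ RH3 := inferInstanceAs (Module ℝ (H3 × ℝ))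
instance : FiniteDimensional ℝ RH3 := inferInstanceAs (FiniteDimensional ℝ (H3 × ℝ))

noncomputable instance : LieRing RH3 :=
  { (inferInstance : AddCommGroup RH3) with
    bracket := fun x y => (⁅x.1, y.1⁆, 0)
    add_lie := by
      intro x y z
      show (⁅x.1 + y.1, z.1⁆, (0:ℝ)) = (⁅x.1, z.1⁆ + ⁅y.1, z.1⁆, 0 + 0)
      simp [add_lie]
    lie_add := by
      intro x y z
      show (⁅x.1, y.1 + z.1⁆, (0:ℝ)) = (⁅x.1, y.1⁆ + ⁅x.1, z.1⁆, 0 + 0)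
      simp [lie_add]
    lie_self := by
      intro x
      show (⁅x.1, x.1⁆, (0:ℝ)) = (0, 0)
      simp
    leibniz_lie := by
      intro x y z
      show (⁅x.1, ⁅y.1, z.1⁆⁆, (0:ℝ)) = (⁅⁅x.1, y.1⁆, z.1⁆ + ⁅y.1, ⁅x.1, z.1⁆⁆, 0 + 0)
      rw [← leibniz_lie]
      simp }

noncomputable instance : LieAlgebra ℝ RH3 :=
  { lie_smul := by
      intro r x y
      show (⁅x.1, r • y.1⁆, (0:ℝ)) = (r • ⁅x.1, y.1⁆, r • (0:ℝ))
      simp }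

/-!
Write `A` for the `e₁, e₂`-block of a derivation `D`. Applying `D` to `e₃ = ⁅e₁, e₂⁆` gives
`D e₃ = (tr A) • e₃`, and applying it to `⁅e₄, e₁⁆ = ⁅e₄, e₂⁆ = 0` puts `D e₄` in `span {e₃, e₄}`.
So in the basis `(e₁, e₂ | e₃, e₄)` the matrix of `D` is `fromBlocks A 0 B !![tr A, u; 0, v]`,
and conversely every such matrix is a derivation. Its characteristic polynomial is
`(X - tr A) (X - v) · charpoly A`, and `charpoly A` runs through all `X² - s X + p`
(companion matrices).
-/

open Matrix

section Charpoly

variable {R : Type*} [CommRing R] [Nontrivial R]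

lemma charpoly_upperTriangular_fin_two (a u v : R) :
    !![a, u; 0, v].charpoly = (X - C a) * (X - C v) := by
  rw [charpoly_fin_two, trace_fin_two_of, det_fin_two_of]
  simp only [map_add, map_mul, mul_zero, sub_zero]
  ring

lemma charpoly_fromBlocks_trace (A B : Matrix (Fin 2) (Fin 2) R) (u v : R) :
    (fromBlocks A 0 B !![A.trace, u; 0, v]).charpoly =
      (X - C A.trace) * (X - C v) * (X ^ 2 - C A.trace * X + C A.det) := by
  rw [charpoly_fromBlocks_zero₁₂, charpoly_upperTriangular_fin_two, charpoly_fin_two]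
  ring

lemma exists_fromBlocks_charpoly_eq_iff (f : R[X]) :
    (∃ (A B : Matrix (Fin 2) (Fin 2) R) (u v : R),
        (fromBlocks A 0 B !![A.trace, u; 0, v]).charpoly = f) ↔
      ∃ s v p : R, f = (X - C s) * (X - C v) * (X ^ 2 - C s * X + C p) := by
  simp only [charpoly_fromBlocks_trace]
  constructor
  · rintro ⟨A, -, -, v, rfl⟩
    exact ⟨A.trace, v, A.det, rfl⟩
  · rintro ⟨s, v, p, rfl⟩
    refine ⟨!![0, -p; 1, s], 0, 0, v, ?_⟩
    simp [trace_fin_two, det_fin_two]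

end Charpoly

namespace RH3

/-- The bracket of `rh₃` in the coordinates of the basis `(e₁, e₂ | e₃, e₄)`. -/
def coordBracket {R : Type*} [CommRing R] (x y : Fin 2 ⊕ Fin 2 → R) : Fin 2 ⊕ Fin 2 → R :=
  Pi.single (.inr 0) (x (.inl 0) * y (.inl 1) - x (.inl 1) * y (.inl 0))

lemma coordBracket_leibniz_iff {R : Type*} [CommRing R]
    (M : Matrix (Fin 2 ⊕ Fin 2) (Fin 2 ⊕ Fin 2) R) :
    (∀ x y, M *ᵥ coordBracket x y = coordBracket (M *ᵥ x) y + coordBracket x (M *ᵥ y)) ↔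
      ∃ (A B : Matrix (Fin 2) (Fin 2) R) (u v : R), M = fromBlocks A 0 B !![A.trace, u; 0, v] := by
  constructor
  · intro h
    have col₃ (i : Fin 2 ⊕ Fin 2) :
        M i (.inr 0) = (Pi.single (.inr 0) (M (.inl 0) (.inl 0) + M (.inl 1) (.inl 1)) :
          Fin 2 ⊕ Fin 2 → R) i := by
      simpa [coordBracket, Pi.single_add] using
        congrFun (h (Pi.single (.inl 0) 1) (Pi.single (.inl 1) 1)) i
    have h₀₄ : M (.inl 0) (.inr 1) = 0 := by
      simpa [coordBracket] using
        (congrFun (h (Pi.single (.inr 1) 1) (Pi.single (.inl 1) 1)) (.inr 0)).symm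
    have h₁₄ : M (.inl 1) (.inr 1) = 0 := by
      simpa [coordBracket] using
        congrFun (h (Pi.single (.inr 1) 1) (Pi.single (.inl 0) 1)) (.inr 0)
    refine ⟨M.toBlocks₁₁, M.toBlocks₂₁, M (.inr 0) (.inr 1), M (.inr 1) (.inr 1), ?_⟩
    ext (i | i) (j | j) <;> fin_cases i <;> fin_cases j <;>
      simp [toBlocks₁₁, toBlocks₂₁, trace_fin_two, col₃, h₀₄, h₁₄]
  · rintro ⟨A, B, u, v, rfl⟩ x y
    ext (i | i) <;> fin_cases i <;>
      simp [coordBracket, mulVec, dotProduct, Fintype.sum_sum_type, Pi.single_apply,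
        trace_fin_two] <;> ring

def coordEquiv : RH3 ≃ₗ[ℝ] (Fin 2 ⊕ Fin 2 → ℝ) where
  toFun x := Sum.elim ![x.1 0, x.1 1] ![x.1 2, x.2]
  invFun c := (![c (.inl 0), c (.inl 1), c (.inr 0)], c (.inr 1))
  map_add' x y := by ext (i | i) <;> fin_cases i <;> rfl
  map_smul' r x := by ext (i | i) <;> fin_cases i <;> rfl
  left_inv x := Prod.ext (funext fun i => by fin_cases i <;> rfl) rfl
  right_inv c := by ext (i | i) <;> fin_cases i <;> rfl

noncomputable def stdBasis : Module.Basis (Fin 2 ⊕ Fin 2) ℝ RH3 := .ofEquivFun coordEquiv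

lemma coordEquiv_lie (x y : RH3) :
    coordEquiv ⁅x, y⁆ = coordBracket (coordEquiv x) (coordEquiv y) := by
  ext (i | i) <;> fin_cases i <;> rfl

lemma coordEquiv_apply_eq_toMatrix_mulVec (L : Module.End ℝ RH3) (x : RH3) :
    coordEquiv (L x) = LinearMap.toMatrix stdBasis stdBasis L *ᵥ coordEquiv x := by
  have repr_eq (y : RH3) : ⇑(stdBasis.repr y) = coordEquiv y :=
    funext (Module.Basis.ofEquivFun_repr_apply _ y)
  rw [← repr_eq, ← repr_eq, LinearMap.toMatrix_mulVec_repr]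

lemma exists_lieDerivation_toMatrix_eq_iff (M : Matrix (Fin 2 ⊕ Fin 2) (Fin 2 ⊕ Fin 2) ℝ) :
    (∃ D : LieDerivation ℝ RH3 RH3, LinearMap.toMatrix stdBasis stdBasis D = M) ↔
      ∀ x y, M *ᵥ coordBracket x y = coordBracket (M *ᵥ x) y + coordBracket x (M *ᵥ y) := by
  constructor
  · rintro ⟨D, rfl⟩ x y
    obtain ⟨x, rfl⟩ := coordEquiv.surjective x
    obtain ⟨y, rfl⟩ := coordEquiv.surjective y
    simp only [← coordEquiv_lie, ← coordEquiv_apply_eq_toMatrix_mulVec, ← map_add]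
    exact congrArg coordEquiv ((D.apply_lie_eq_add x y).trans (add_comm _ _))
  · intro h
    refine ⟨⟨Matrix.toLin stdBasis stdBasis M, fun x y => coordEquiv.injective ?_⟩,
      LinearMap.toMatrix_toLin _ _ _⟩
    rw [sub_eq_add_neg, lie_skew, map_add]
    simp only [coordEquiv_lie, coordEquiv_apply_eq_toMatrix_mulVec, LinearMap.toMatrix_toLin, h,
      add_comm]

end RH3

theorem charpoly_derivation_rh3_iff_general (f : Polynomial ℝ) :
    (∃ D : LieDerivation ℝ RH3 RH3, LinearMap.charpoly D.toLinearMap = f) ↔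
      ∃ s v p : ℝ, f = (X - C s) * (X - C v) * (X ^ 2 - C s * X + C p) := by
  rw [← exists_fromBlocks_charpoly_eq_iff]
  calc (∃ D : LieDerivation ℝ RH3 RH3, LinearMap.charpoly D.toLinearMap = f)
      ↔ ∃ M, (∃ D : LieDerivation ℝ RH3 RH3, LinearMap.toMatrix RH3.stdBasis RH3.stdBasis D = M) ∧
          M.charpoly = f :=
        ⟨fun ⟨D, hD⟩ => ⟨_, ⟨D, rfl⟩, by rwa [LinearMap.charpoly_toMatrix]⟩,
          fun ⟨_, ⟨D, hD⟩, hM⟩ => ⟨D, by rwa [← hD, LinearMap.charpoly_toMatrix] at hM⟩⟩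
    _ ↔ _ := by
      simp only [RH3.exists_lieDerivation_toMatrix_eq_iff, RH3.coordBracket_leibniz_iff]
      simp

/-- A monic real polynomial `f` of degree 4 is the characteristic polynomial of some
derivation of `rh₃ = h₃ × ℝ` if and only if
`f = (X - s) * (X - v) * (X² - s*X + p)` for some real numbers `s`, `v` and `p`. -/
theorem charpoly_derivation_rh3_iff (f : Polynomial ℝ) (hf : f.Monic)
    (hdeg : f.natDegree = 4) :
    (∃ D : LieDerivation ℝ RH3 RH3, LinearMap.charpoly D.toLinearMap = f) ↔
      ∃ s v p : ℝ, f = (X - C s) * (X - C v) * (X ^ 2 - C s * X + C p) :=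
  charpoly_derivation_rh3_iff_general f
end

section
/- Let λ be a real number. If some derivation of the filiform Lie algebra n₄ has characteristic polynomial X(X − 1)(X − λ)², then λ ∈ {−1, 1/2, 1}. -/
set_option linter.unusedTactic false
set_option linter.unnecessarySeqFocus false
set_option linter.unreachableTactic false

open Polynomial

/-- The 4-dimensional filiform Lie algebra `n₄`: the real vector space `Fin 4 → ℝ` with
basis `e₁, e₂, e₃, e₄` and only nonzero brackets `⁅e₁, e₂⁆ = e₃` and `⁅e₁, e₃⁆ = e₄`. -/
def N4 : Type := Fin 4 → ℝ

noncomputable instance : AddCommGroup N4 := Pi.addCommGroup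
noncomputable instance : Module ℝ N4 := Pi.module _ _ _
instance : FiniteDimensional ℝ N4 := inferInstanceAs (FiniteDimensional ℝ (Fin 4 → ℝ))

lemma N4.add_apply (x y : N4) (i : Fin 4) : (x + y) i = x i + y i := rfl
lemma N4.smul_apply (r : ℝ) (x : N4) (i : Fin 4) : (r • x) i = r * x i := rfl

noncomputable instance : LieRing N4 :=
  { (inferInstance : AddCommGroup N4) with
    bracket := fun x y => ![0, 0, x 0 * y 1 - x 1 * y 0, x 0 * y 2 - x 2 * y 0]
    add_lie := by
      intro x y z
      show (![_,_,_,_] : Fin 4 → ℝ) = ![_,_,_,_] + ![_,_,_,_]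
      funext i
      fin_cases i <;> simp [N4.add_apply] <;> (try erw [N4.add_apply]) <;> simp <;> ring
    lie_add := by
      intro x y z
      show (![_,_,_,_] : Fin 4 → ℝ) = ![_,_,_,_] + ![_,_,_,_]
      funext i
      fin_cases i <;> simp [N4.add_apply] <;> (try erw [N4.add_apply]) <;> simp <;> ring
    lie_self := by
      intro x
      show (![_,_,_,_] : Fin 4 → ℝ) = 0
      funext i
      fin_cases i <;> simp <;> ring
    leibniz_lie := by
      intro x y z
      show (![_,_,_,_] : Fin 4 → ℝ) = ![_,_,_,_] + ![_,_,_,_]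
      funext i
      fin_cases i <;> simp [N4.add_apply] <;> (try erw [N4.add_apply]) <;> simp <;> ring }

noncomputable instance : LieAlgebra ℝ N4 :=
  { lie_smul := by
      intro r x y
      show (![_,_,_,_] : Fin 4 → ℝ) = r • ![_,_,_,_]
      funext i
      fin_cases i <;> simp [N4.smul_apply] <;> (try erw [N4.smul_apply]) <;> simp <;> ring }

/-! In the basis `e₁, …, e₄` (here `N4.basis 0, …, N4.basis 3`) every derivation `D` is lower
triangular with diagonal `a, b, a + b, 2a + b`, where `a` and `b` are its diagonal entries at `e₁`
and `e₂`: apply `D` to `e₃ = ⁅e₁, e₂⁆` and to `e₄ = ⁅e₁, e₃⁆`, and use `⁅e₂, e₃⁆ = 0` to kill the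
`e₁`-component of `D e₂`. Matching these eigenvalues with `0, 1, λ, λ`, one of `a, b, a + b, 2a + b`
vanishes, and the four cases leave `λ = 1`, `λ = 1/2`, `λ = -1` and nothing, respectively. -/

theorem Matrix.charpoly_of_isLowerTriangular {n R : Type*} [Fintype n] [DecidableEq n]
    [LinearOrder n] [CommRing R] (M : Matrix n n R) (h : M.IsLowerTriangular) :
    M.charpoly = ∏ i : n, (X - C (M i i)) := by
  rw [← Matrix.charpoly_transpose]
  exact Matrix.charpoly_of_isUpperTriangular _ h.transpose

namespace N4

noncomputable def basis : Module.Basis (Fin 4) ℝ N4 := Pi.basisFun ℝ (Fin 4)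

lemma basis_apply (i j : Fin 4) : basis i j = if i = j then 1 else 0 := by
  change (Pi.basisFun ℝ (Fin 4) i : Fin 4 → ℝ) j = _
  rw [Pi.basisFun_apply, Pi.single_apply]
  simp only [eq_comm]

lemma basis_repr_apply (x : N4) (i : Fin 4) : basis.repr x i = x i := rfl

lemma lie_def (x y : N4) :
    ⁅x, y⁆ = ![0, 0, x 0 * y 1 - x 1 * y 0, x 0 * y 2 - x 2 * y 0] := rfl

lemma lie_basis_zero_one : ⁅basis 0, basis 1⁆ = basis 2 := by
  funext i; fin_cases i <;> simp [lie_def, basis_apply]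

lemma lie_basis_zero_two : ⁅basis 0, basis 2⁆ = basis 3 := by
  funext i; fin_cases i <;> simp [lie_def, basis_apply]

lemma lie_basis_one_two : ⁅basis 1, basis 2⁆ = 0 := by
  funext i; fin_cases i <;> simp [lie_def, basis_apply] <;> rfl

variable (D : LieDerivation ℝ N4 N4)

lemma derivation_basis_two_apply (i : Fin 4) :
    D (basis 2) i = ![0, 0, D (basis 0) 0 + D (basis 1) 1, D (basis 1) 2] i := by
  rw [← lie_basis_zero_one, D.apply_lie_eq_add, N4.add_apply]
  fin_cases i <;> simp [lie_def, basis_apply] <;> ring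

lemma derivation_basis_one_apply_zero : D (basis 1) 0 = 0 := by
  have h := congrFun (D.apply_lie_eq_add (basis 1) (basis 2)) 3
  rw [lie_basis_one_two, map_zero, N4.add_apply] at h
  change (0 : ℝ) = _ at h
  simpa [lie_def, basis_apply, derivation_basis_two_apply] using h.symm

lemma derivation_basis_three_apply (i : Fin 4) :
    D (basis 3) i = ![0, 0, 0, 2 * D (basis 0) 0 + D (basis 1) 1] i := by
  rw [← lie_basis_zero_two, D.apply_lie_eq_add, N4.add_apply]
  fin_cases i <;> simp [lie_def, basis_apply, derivation_basis_two_apply] <;> ring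

lemma toMatrix_derivation :
    LinearMap.toMatrix basis basis D.toLinearMap =
      !![D (basis 0) 0, 0, 0, 0;
         D (basis 0) 1, D (basis 1) 1, 0, 0;
         D (basis 0) 2, D (basis 1) 2, D (basis 0) 0 + D (basis 1) 1, 0;
         D (basis 0) 3, D (basis 1) 3, D (basis 1) 2, 2 * D (basis 0) 0 + D (basis 1) 1] := by
  ext i j
  fin_cases i <;> fin_cases j <;>
    simp [LinearMap.toMatrix_apply, basis_repr_apply, derivation_basis_one_apply_zero,
      derivation_basis_two_apply, derivation_basis_three_apply]

lemma charpoly_derivation :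
    LinearMap.charpoly D.toLinearMap =
      (X - C (D (basis 0) 0)) * (X - C (D (basis 1) 1)) *
        (X - C (D (basis 0) 0 + D (basis 1) 1)) * (X - C (2 * D (basis 0) 0 + D (basis 1) 1)) := by
  rw [← LinearMap.charpoly_toMatrix D.toLinearMap basis, toMatrix_derivation,
    Matrix.charpoly_of_isLowerTriangular, Fin.prod_univ_four]
  · simp
  · intro i j hij
    rw [OrderDual.toDual_lt_toDual] at hij
    fin_cases i <;> fin_cases j <;> simp_all

end N4

lemma symmetric_functions_eq_of_prod_eq {a b lam : ℝ}
    (h : (X - C a) * (X - C b) * (X - C (a + b)) * (X - C (2 * a + b)) =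
      X * (X - 1) * (X - C lam) ^ 2) :
    a * b * (a + b) * (2 * a + b) = 0 ∧ 4 * a + 3 * b = 1 + 2 * lam ∧
      5 * a ^ 2 + 9 * a * b + 3 * b ^ 2 = lam ^ 2 + 2 * lam ∧
      2 * a ^ 3 + 8 * a ^ 2 * b + 6 * a * b ^ 2 + b ^ 3 = lam ^ 2 := by
  have hv (t : ℝ) : (t - a) * (t - b) * (t - (a + b)) * (t - (2 * a + b)) =
      t * (t - 1) * (t - lam) ^ 2 := by
    simpa using congrArg (eval t) h
  -- a monic quartic is determined by its values at `0, ±1, 2`: these combinations read off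
  -- its coefficients
  refine ⟨?_, ?_, ?_, ?_⟩
  · linear_combination hv 0
  · linear_combination (1/2) * hv 1 + (1/6) * hv (-1) - (1/6) * hv 2 - (1/2) * hv 0
  · linear_combination (1/2) * hv 1 + (1/2) * hv (-1) - hv 0
  · linear_combination (-1) * hv 1 + (1/3) * hv (-1) + (1/6) * hv 2 + (1/2) * hv 0

lemma eq_neg_one_or_eq_half_or_eq_one {a b lam : ℝ} (h0 : a * b * (a + b) * (2 * a + b) = 0)
    (h1 : 4 * a + 3 * b = 1 + 2 * lam) (h2 : 5 * a ^ 2 + 9 * a * b + 3 * b ^ 2 = lam ^ 2 + 2 * lam)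
    (h3 : 2 * a ^ 3 + 8 * a ^ 2 * b + 6 * a * b ^ 2 + b ^ 3 = lam ^ 2) :
    lam = -1 ∨ lam = 1 / 2 ∨ lam = 1 := by
  simp only [mul_eq_zero] at h0
  rcases h0 with ((rfl | rfl) | hab) | h2ab
  · obtain rfl : b = (1 + 2 * lam) / 3 := by linarith
    have : (lam - 1) ^ 2 = 0 := by linear_combination 3 * h2
    right; right
    linarith [pow_eq_zero_iff two_ne_zero |>.mp this]
  · obtain rfl : a = (1 + 2 * lam) / 4 := by linarith
    have : (2 * lam - 1) * (2 * lam - 5) = 0 := by linear_combination 16 * h2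
    rcases mul_eq_zero.mp this with h | h
    · right; left; linarith
    · obtain rfl : lam = 5 / 2 := by linarith
      norm_num at h3
  · obtain rfl : b = -a := by linarith
    obtain rfl : a = 1 + 2 * lam := by linarith
    have : (lam + 1) * (5 * lam + 1) = 0 := by linear_combination -h2
    rcases mul_eq_zero.mp this with h | h
    · left; linarith
    · obtain rfl : lam = -1 / 5 := by linarith
      norm_num at h3
  · obtain rfl : b = -2 * a := by linarith
    obtain rfl : a = -(1 + 2 * lam) / 2 := by linarith
    have hquad : 8 * lam ^ 2 + 12 * lam + 1 = 0 := by linear_combination (-4) * h2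
    have hcubic : 8 * lam ^ 3 + 16 * lam ^ 2 + 6 * lam + 1 = 0 := by linear_combination (-4) * h3
    have : (9 : ℝ) / 2 = 0 := by
      linear_combination (4 * lam + 8) * hcubic - (4 * lam ^ 2 + 10 * lam + 7 / 2) * hquad
    norm_num at this

/-- If some derivation of the filiform Lie algebra `n₄` has characteristic polynomial
`X * (X - 1) * (X - λ)²`, then `λ ∈ {-1, 1/2, 1}`. -/
theorem charpoly_derivation_n4_r4_lambda (lam : ℝ)
    (h : ∃ D : LieDerivation ℝ N4 N4,
      LinearMap.charpoly D.toLinearMap = X * (X - 1) * (X - C lam) ^ 2) :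
    lam = -1 ∨ lam = 1 / 2 ∨ lam = 1 := by
  obtain ⟨D, hD⟩ := h
  rw [N4.charpoly_derivation] at hD
  obtain ⟨h0, h1, h2, h3⟩ := symmetric_functions_eq_of_prod_eq hD
  exact eq_neg_one_or_eq_half_or_eq_one h0 h1 h2 h3
end
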